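/- arXiv:1302.1734 — 6 statements merged into one kernel-verified Lean document; each statement's English description precedes it below -/
import Mathlib

section
/- For every metric space (S,ρ), every sequence x : ℕ → S, all integers m, k, n ≥ 1 and every real r ≥ 0, the correlation sum and the diagonal line counts satisfy n²·C^m_k(x,n,r) = Σ_{l ≥ k} (l − k + 1)·L^m_l(x,n,r). -/
open Filter Topology MeasureTheory

/-- `dmax h x y = max_{0 ≤ l < h} dist (x l) (y l)` (equals 0 if `h = 0`). -/
noncomputable def dmax {S : Type*} [MetricSpace S] (h : ℕ) (x y : ℕ → S) : ℝ :=
  (((Finset.range h).sup fun l => nndist (x l) (y l) : NNReal) : ℝ)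

/-- the shifted sequence `x^{(i)}`. -/
def shift {S : Type*} (i : ℕ) (x : ℕ → S) : ℕ → S := fun l => x (i + l)

/-- `(i,j)` is an `r`-recurrence in the `m`'th embedding of the trajectory of `x`. -/
def isRec {S : Type*} [MetricSpace S] (m : ℕ) (x : ℕ → S) (r : ℝ) (i j : ℕ) : Prop :=
  dmax m (shift i x) (shift j x) ≤ r

open Classical in
/-- `L^m_k(x,n,r)`: the number of diagonal lines of length `k`
in the `n × n` recurrence plot. -/
noncomputable def Lcount {S : Type*} [MetricSpace S] (m k : ℕ) (x : ℕ → S) (n : ℕ)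
    (r : ℝ) : ℕ :=
  ((Finset.range (n + 1) ×ˢ Finset.range (n + 1)).filter fun p =>
    p.1 + k ≤ n ∧ p.2 + k ≤ n ∧
    (∀ h < k, isRec m x r (p.1 + h) (p.2 + h)) ∧
    (p.1 = 0 ∨ p.2 = 0 ∨ ¬ isRec m x r (p.1 - 1) (p.2 - 1)) ∧
    (p.1 + k = n ∨ p.2 + k = n ∨ ¬ isRec m x r (p.1 + k) (p.2 + k))).card

open Classical in
/-- `n² · C^m_k(x,n,r)`: the number of pairs `(i,j)`, `0 ≤ i,j ≤ n-k`, with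
`d^m_k(x^{(i)}, x^{(j)}) ≤ r`. -/
noncomputable def Ccount {S : Type*} [MetricSpace S] (m k : ℕ) (x : ℕ → S) (n : ℕ)
    (r : ℝ) : ℕ :=
  ((Finset.range (n + 1) ×ˢ Finset.range (n + 1)).filter fun p =>
    p.1 + k ≤ n ∧ p.2 + k ≤ n ∧
    dmax (m + k - 1) (shift p.1 x) (shift p.2 x) ≤ r).card

/-- The correlation sum `C^m_k(x,n,r)`. -/
noncomputable def Csum {S : Type*} [MetricSpace S] (m k : ℕ) (x : ℕ → S) (n : ℕ)
    (r : ℝ) : ℝ :=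
  (Ccount m k x n r : ℝ) / (n : ℝ) ^ 2

/-- The `k`-recurrence rate `RR^m_k(x,n,r) = (1/n²) Σ_{l ≥ k} l · L^m_l(x,n,r)`. -/
noncomputable def RRsum {S : Type*} [MetricSpace S] (m k : ℕ) (x : ℕ → S) (n : ℕ)
    (r : ℝ) : ℝ :=
  (1 / (n : ℝ) ^ 2) * ∑' l : ℕ, if k ≤ l then (l : ℝ) * (Lcount m l x n r : ℝ) else 0

/-!
An `r`-recurrent window of length `k` on a diagonal of the recurrence plot extends, as far as the
recurrences and the borders of the plot allow, to exactly one maximal diagonal line, and a line of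
length `l ≥ k` contains exactly `l - k + 1` such windows. Counting windows by the line through
them gives the identity, because `d^m_k(x^{(i)}, x^{(j)}) ≤ r` says precisely that
`(i, j), …, (i + k - 1, j + k - 1)` are all `r`-recurrences.
-/

open Finset

lemma dmax_le_iff {S : Type*} [MetricSpace S] {h : ℕ} {x y : ℕ → S} {r : ℝ} (hr : 0 ≤ r) :
    dmax h x y ≤ r ↔ ∀ l < h, dist (x l) (y l) ≤ r := by
  lift r to NNReal using hr
  simp only [dmax, NNReal.coe_le_coe, Finset.sup_le_iff, Finset.mem_range, dist_nndist]

lemma forall_lt_add_sub_one_iff {P : ℕ → Prop} {m k : ℕ} (hm : 1 ≤ m) (hk : 1 ≤ k) :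
    (∀ l < m + k - 1, P l) ↔ ∀ h < k, ∀ l < m, P (h + l) := by
  refine ⟨fun H h hh l hl => H _ (by omega), fun H l hl => ?_⟩
  rcases lt_or_ge l k with hlk | hlk
  · simpa using H l hlk 0 (by omega)
  · convert H (k - 1) (by omega) (l - (k - 1)) (by omega) using 1
    omega

lemma dmax_shift_le_iff_forall_isRec {S : Type*} [MetricSpace S] {m k : ℕ} {x : ℕ → S} {r : ℝ}
    (hm : 1 ≤ m) (hk : 1 ≤ k) (hr : 0 ≤ r) (i j : ℕ) :
    dmax (m + k - 1) (shift i x) (shift j x) ≤ r ↔ ∀ h < k, isRec m x r (i + h) (j + h) := by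
  simp only [isRec, dmax_le_iff hr, shift, add_assoc]
  exact forall_lt_add_sub_one_iff hm hk

lemma exists_ge_and_not_succ {P : ℕ → Prop} {a N : ℕ} (ha : P a) (hN : ∀ b, P b → b ≤ N) :
    ∃ b, a ≤ b ∧ P b ∧ ¬ P (b + 1) := by
  classical
  refine ⟨Nat.findGreatest P N, Nat.le_findGreatest (hN a ha) ha,
    Nat.findGreatest_spec (hN a ha) ha, fun hb => ?_⟩
  have := Nat.le_findGreatest (hN _ hb) hb
  omega

section DiagonalLines

variable (R : ℕ → ℕ → Prop) (n : ℕ)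

def IsDiagRun (l i j : ℕ) : Prop :=
  i + l ≤ n ∧ j + l ≤ n ∧ ∀ h < l, R (i + h) (j + h)

def IsLeftMaximal (i j : ℕ) : Prop :=
  i = 0 ∨ j = 0 ∨ ¬ R (i - 1) (j - 1)

def IsRightMaximal (l i j : ℕ) : Prop :=
  i + l = n ∨ j + l = n ∨ ¬ R (i + l) (j + l)

def IsDiagLine (l i j : ℕ) : Prop :=
  IsDiagRun R n l i j ∧ IsLeftMaximal R i j ∧ IsRightMaximal R n l i j

open Classical in
noncomputable def diagRuns (l : ℕ) : Finset (ℕ × ℕ) :=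
  {p ∈ range (n + 1) ×ˢ range (n + 1) | IsDiagRun R n l p.1 p.2}

open Classical in
noncomputable def diagLines (l : ℕ) : Finset (ℕ × ℕ) :=
  {p ∈ range (n + 1) ×ˢ range (n + 1) | IsDiagLine R n l p.1 p.2}

variable {R n} {l l' i j i' j' t t' : ℕ}

lemma IsDiagRun.length_le (h : IsDiagRun R n l i j) : l ≤ n := by
  obtain ⟨hi, -, -⟩ := h
  omega

lemma IsDiagRun.subrun {k : ℕ} (h : IsDiagRun R n l i j) (htk : t + k ≤ l) :
    IsDiagRun R n k (i + t) (j + t) := by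
  obtain ⟨hi, hj, hR⟩ := h
  refine ⟨by omega, by omega, fun s hs => ?_⟩
  simpa only [add_assoc] using hR (t + s) (by omega)

lemma IsDiagRun.cons (h : IsDiagRun R n l (i + 1) (j + 1)) (hR : R i j) :
    IsDiagRun R n (l + 1) i j := by
  obtain ⟨hi, hj, hR'⟩ := h
  refine ⟨by omega, by omega, fun s hs => ?_⟩
  rcases s with _ | s
  · simpa using hR
  · convert hR' s (by omega) using 1 <;> omega

lemma IsDiagRun.snoc (h : IsDiagRun R n l i j) (hR : R (i + l) (j + l)) (hi : i + l < n)
    (hj : j + l < n) : IsDiagRun R n (l + 1) i j := by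
  refine ⟨hi, hj, fun s hs => ?_⟩
  rcases Nat.lt_succ_iff_lt_or_eq.mp hs with hs | rfl
  exacts [h.2.2 s hs, hR]

lemma IsDiagRun.exists_isLeftMaximal (h : IsDiagRun R n l i j) :
    ∃ t ≤ i, t ≤ j ∧ IsDiagRun R n (t + l) (i - t) (j - t) ∧ IsLeftMaximal R (i - t) (j - t) := by
  obtain ⟨t, -, ⟨hti, htj, hrun⟩, hmax⟩ :=
    exists_ge_and_not_succ (P := fun t => t ≤ i ∧ t ≤ j ∧ IsDiagRun R n (t + l) (i - t) (j - t))
      ⟨i.zero_le, j.zero_le, by simpa using h⟩ fun _ ht => ht.1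
  refine ⟨t, hti, htj, hrun, ?_⟩
  by_contra! hext
  simp only [IsLeftMaximal, not_or, not_not] at hext
  obtain ⟨hi, hj, hR⟩ := hext
  rw [show i - t = i - (t + 1) + 1 by omega, show j - t = j - (t + 1) + 1 by omega] at hrun
  rw [Nat.sub_sub, Nat.sub_sub] at hR
  exact hmax ⟨by omega, by omega, by simpa only [add_right_comm] using hrun.cons hR⟩

lemma IsDiagRun.exists_isRightMaximal (h : IsDiagRun R n l i j) :
    ∃ l', l ≤ l' ∧ IsDiagRun R n l' i j ∧ IsRightMaximal R n l' i j := by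
  obtain ⟨l', hll', hrun, hmax⟩ :=
    exists_ge_and_not_succ (P := fun l => IsDiagRun R n l i j) h fun _ h' => h'.length_le
  refine ⟨l', hll', hrun, ?_⟩
  by_contra! hext
  simp only [IsRightMaximal, not_or, not_not] at hext
  obtain ⟨hi, hj, hR⟩ := hext
  exact hmax (hrun.snoc hR (hrun.1.lt_of_ne hi) (hrun.2.1.lt_of_ne hj))

lemma IsDiagRun.exists_isDiagLine {k : ℕ} (h : IsDiagRun R n k i j) :
    ∃ l i₀ j₀ t, IsDiagLine R n l i₀ j₀ ∧ t + k ≤ l ∧ i = i₀ + t ∧ j = j₀ + t := by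
  obtain ⟨t, hti, htj, hrun, hleft⟩ := h.exists_isLeftMaximal
  obtain ⟨l, hl, hrun', hright⟩ := hrun.exists_isRightMaximal
  exact ⟨l, i - t, j - t, t, ⟨hrun', hleft, hright⟩, by omega, by omega, by omega⟩

lemma IsDiagRun.le_offset (h : IsDiagRun R n l i j) (h' : IsLeftMaximal R i' j') (ht : t < l)
    (hi : i + t = i' + t') (hj : j + t = j' + t') : t ≤ t' := by
  by_contra! htt
  rcases h' with h' | h' | h'
  · omega
  · omega
  · exact h' (by convert h.2.2 (t - t' - 1) (by omega) using 1 <;> omega)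

lemma IsDiagRun.le_length (h : IsDiagRun R n l i j) (h' : IsRightMaximal R n l' i j) :
    l ≤ l' := by
  obtain ⟨hi, hj, hR⟩ := h
  by_contra! hll
  rcases h' with h' | h' | h'
  · omega
  · omega
  · exact h' (hR l' hll)

lemma IsDiagLine.eq_of_add_eq (h : IsDiagLine R n l i j) (h' : IsDiagLine R n l' i' j')
    (ht : t < l) (ht' : t' < l') (hi : i + t = i' + t') (hj : j + t = j' + t') :
    t = t' ∧ l = l' := by
  obtain rfl : t = t' :=
    (h.1.le_offset h'.2.1 ht hi hj).antisymm (h'.1.le_offset h.2.1 ht' hi.symm hj.symm)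
  obtain ⟨rfl, rfl⟩ : i = i' ∧ j = j' := by omega
  exact ⟨rfl, (h.1.le_length h'.2.2).antisymm (h'.1.le_length h.2.2)⟩

lemma mem_diagRuns {p : ℕ × ℕ} : p ∈ diagRuns R n l ↔ IsDiagRun R n l p.1 p.2 := by
  simp only [diagRuns, mem_filter, mem_product, mem_range, and_iff_right_iff_imp]
  rintro ⟨hi, hj, -⟩
  omega

lemma mem_diagLines {p : ℕ × ℕ} : p ∈ diagLines R n l ↔ IsDiagLine R n l p.1 p.2 := by
  simp only [diagLines, mem_filter, mem_product, mem_range, and_iff_right_iff_imp]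
  rintro ⟨⟨hi, hj, -⟩, -⟩
  omega

lemma diagLines_eq_empty (h : n < l) : diagLines R n l = ∅ :=
  eq_empty_of_forall_notMem fun _ hp => absurd (mem_diagLines.1 hp).1.length_le (by omega)

theorem card_diagRuns_eq_sum {k : ℕ} (hk : 1 ≤ k) :
    #(diagRuns R n k) = ∑ l ∈ Icc k n, (l - k + 1) * #(diagLines R n l) := by
  have hsum : ∑ l ∈ Icc k n, (l - k + 1) * #(diagLines R n l) =
      #((Icc k n).sigma fun l => diagLines R n l ×ˢ range (l - k + 1)) := by
    rw [card_sigma]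
    exact sum_congr rfl fun l _ => by rw [card_product, card_range, mul_comm]
  rw [hsum]
  -- a window is the `t`-th window of length `k` of the unique line through it
  refine (card_nbij (fun q => (q.2.1.1 + q.2.2, q.2.1.2 + q.2.2)) ?_ ?_ ?_).symm
  · rintro ⟨l, p, t⟩ hq
    simp only [mem_coe, mem_sigma, mem_product, mem_range, mem_Icc, mem_diagLines] at hq ⊢
    obtain ⟨⟨hkl, -⟩, hline, ht⟩ := hq
    exact mem_diagRuns.2 (hline.1.subrun (by omega))
  · rintro ⟨l, p, t⟩ hq ⟨l', p', t'⟩ hq' heq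
    simp only [mem_coe, mem_sigma, mem_product, mem_range, mem_Icc, mem_diagLines] at hq hq'
    obtain ⟨⟨hkl, -⟩, hline, ht⟩ := hq
    obtain ⟨⟨hkl', -⟩, hline', ht'⟩ := hq'
    simp only [Prod.mk.injEq] at heq
    obtain ⟨rfl, rfl⟩ := hline.eq_of_add_eq hline' (by omega) (by omega) heq.1 heq.2
    obtain rfl : p = p' := Prod.ext (by omega) (by omega)
    rfl
  · rintro ⟨i, j⟩ hp
    obtain ⟨l, i₀, j₀, t, hline, htl, rfl, rfl⟩ := (mem_diagRuns.1 hp).exists_isDiagLine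
    refine ⟨⟨l, (i₀, j₀), t⟩, ?_, rfl⟩
    simp only [mem_coe, mem_sigma, mem_product, mem_range, mem_Icc, mem_diagLines]
    exact ⟨⟨by omega, hline.1.length_le⟩, hline, by omega⟩

end DiagonalLines

open Classical in
lemma Lcount_eq_card_diagLines {S : Type*} [MetricSpace S] (m l : ℕ) (x : ℕ → S) (n : ℕ)
    (r : ℝ) :
    Lcount m l x n r = #(diagLines (isRec m x r) n l) := by
  rw [Lcount, diagLines]
  congr 1
  ext p
  rw [mem_filter, mem_filter]
  simp only [IsDiagLine, IsDiagRun, IsLeftMaximal, IsRightMaximal, and_assoc]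

open Classical in
lemma Ccount_eq_card_diagRuns {S : Type*} [MetricSpace S] {m k : ℕ} (x : ℕ → S) (n : ℕ) {r : ℝ}
    (hm : 1 ≤ m) (hk : 1 ≤ k) (hr : 0 ≤ r) :
    Ccount m k x n r = #(diagRuns (isRec m x r) n k) := by
  rw [Ccount, diagRuns]
  congr 1
  ext p
  rw [mem_filter, mem_filter]
  simp only [IsDiagRun, dmax_shift_le_iff_forall_isRec hm hk hr]

/-- For every metric space `(S,ρ)`, every sequence `x : ℕ → S`,
all integers `m, k, n ≥ 1` and every real `r ≥ 0`,
`n² · C^m_k(x,n,r) = Σ_{l ≥ k} (l − k + 1) · L^m_l(x,n,r)`. -/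
theorem corrSum_eq_sum_lines {S : Type*} [MetricSpace S] (x : ℕ → S) (m k n : ℕ)
    (hm : 1 ≤ m) (hk : 1 ≤ k) (hn : 1 ≤ n) (r : ℝ) (hr : 0 ≤ r) :
    (n : ℝ) ^ 2 * Csum m k x n r =
      ∑' l : ℕ, if k ≤ l then ((l : ℝ) - (k : ℝ) + 1) * (Lcount m l x n r : ℝ) else 0 := by
  have hsupp : ∀ l ∉ Icc k n,
      (if k ≤ l then ((l : ℝ) - k + 1) * (Lcount m l x n r : ℝ) else 0) = 0 := by
    intro l hl
    split_ifs with hkl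
    · rw [Lcount_eq_card_diagLines, diagLines_eq_empty (by rw [mem_Icc] at hl; omega)]
      simp
    · rfl
  rw [Csum, mul_div_cancel₀ _ (pow_ne_zero 2 (Nat.cast_ne_zero.2 (by omega))),
    tsum_eq_sum hsupp, Ccount_eq_card_diagRuns x n hm hk hr, card_diagRuns_eq_sum hk]
  push_cast
  refine sum_congr rfl fun l hl => ?_
  rw [if_pos (mem_Icc.1 hl).1, Lcount_eq_card_diagLines, Nat.cast_sub (mem_Icc.1 hl).1]
end

section
/- For every metric space (S,ρ), every sequence x : ℕ → S, all integers m, k, n ≥ 1 and every real r ≥ 0, one has (1/n²)·Σ_{l ≥ k} L^m_l(x,n,r) = C^m_k(x,n,r) − C^m_{k+1}(x,n,r); consequently, whenever C^m_k(x,n,r) > C^m_{k+1}(x,n,r), the k-average line length satisfies LAVG^m_k(x,n,r) = k + C^m_{k+1}(x,n,r)/(C^m_k(x,n,r) − C^m_{k+1}(x,n,r)). -/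
/-!
Along each diagonal of the recurrence plot, a window of `j` consecutive recurrences either
extends to a window of length `j + 1`, or it is the final `j`-window of a unique maximal diagonal
line of some length `l ≥ j`: moving the start of such a line forward by `l - j` is a bijection
onto the non-extendable `j`-windows. Since `n² C^m_j` counts the `j`-windows, this gives
`n² (C^m_j - C^m_{j+1}) = Σ_{l ≥ j} L^m_l`, and summing over `j > k` gives
`Σ_{l ≥ k} (l - k) L^m_l = n² C^m_{k+1}`, from which the average line length follows.
-/

open Filter Topology MeasureTheory

/-- The `k`-average line length
`LAVG^m_k(x,n,r) = RR^m_k(x,n,r) / ((1/n²) Σ_{l ≥ k} L^m_l(x,n,r))`. -/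
noncomputable def LAVGsum {S : Type*} [MetricSpace S] (m k : ℕ) (x : ℕ → S) (n : ℕ)
    (r : ℝ) : ℝ :=
  RRsum m k x n r /
    ((1 / (n : ℝ) ^ 2) * ∑' l : ℕ, if k ≤ l then (Lcount m l x n r : ℝ) else 0)

open Finset

namespace RecurrencePlot

section Combinatorics

variable (R : ℕ → ℕ → Prop) (n : ℕ)

def grid : Finset (ℕ × ℕ) := range (n + 1) ×ˢ range (n + 1)

def IsWindow (j : ℕ) (p : ℕ × ℕ) : Prop :=
  p.1 + j ≤ n ∧ p.2 + j ≤ n ∧ ∀ h < j, R (p.1 + h) (p.2 + h)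

def IsLineStart (l : ℕ) (p : ℕ × ℕ) : Prop :=
  IsWindow R n l p ∧ ¬ IsWindow R n (l + 1) p ∧ (p.1 = 0 ∨ p.2 = 0 ∨ ¬ R (p.1 - 1) (p.2 - 1))

variable {R n}

theorem mem_grid_of_isWindow {j : ℕ} {p : ℕ × ℕ} (hw : IsWindow R n j p) : p ∈ grid n := by
  obtain ⟨h1, h2, -⟩ := hw
  simp only [grid, mem_product, mem_range]
  omega

theorem isWindow_add_iff {d j : ℕ} {p : ℕ × ℕ} :
    IsWindow R n (d + j) p ↔ IsWindow R n d p ∧ IsWindow R n j (p.1 + d, p.2 + d) := by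
  simp only [IsWindow, add_assoc]
  constructor
  · rintro ⟨h1, h2, hw⟩
    exact ⟨⟨by omega, by omega, fun h hh => hw h (by omega)⟩,
      by omega, by omega, fun h hh => hw (d + h) (by omega)⟩
  · rintro ⟨⟨-, -, hw⟩, h1, h2, hw'⟩
    refine ⟨h1, h2, fun h hh => ?_⟩
    rcases lt_or_ge h d with hhd | hhd
    · exact hw h hhd
    · simpa [Nat.add_sub_cancel' hhd] using hw' (h - d) (by omega)

theorem isWindow_succ_iff {j : ℕ} {p : ℕ × ℕ} :
    IsWindow R n (j + 1) p ↔
      IsWindow R n j p ∧ p.1 + j < n ∧ p.2 + j < n ∧ R (p.1 + j) (p.2 + j) := by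
  simp only [IsWindow, Nat.forall_lt_succ_right]
  constructor
  · rintro ⟨h1, h2, hw, hj⟩
    exact ⟨⟨by omega, by omega, hw⟩, by omega, by omega, hj⟩
  · rintro ⟨⟨-, -, hw⟩, h1, h2, hj⟩
    exact ⟨by omega, by omega, hw, hj⟩

variable (R) in
theorem exists_start_of_diagonal (a b : ℕ) :
    ∃ a' b' t, a' + t = a ∧ b' + t = b ∧ (∀ h < t, R (a' + h) (b' + h)) ∧
      (a' = 0 ∨ b' = 0 ∨ ¬ R (a' - 1) (b' - 1)) := by
  induction a generalizing b with
  | zero => exact ⟨0, b, 0, rfl, rfl, fun _ h => absurd h (Nat.not_lt_zero _), Or.inl rfl⟩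
  | succ a ih =>
    rcases b with _ | b
    · exact ⟨a + 1, 0, 0, rfl, rfl, fun _ h => absurd h (Nat.not_lt_zero _), Or.inr (Or.inl rfl)⟩
    by_cases hab : R a b
    · obtain ⟨a', b', t, ha, hb, hrec, hs⟩ := ih b
      refine ⟨a', b', t + 1, by omega, by omega, fun h hh => ?_, hs⟩
      rcases Nat.lt_succ_iff_lt_or_eq.1 hh with hh | rfl
      · exact hrec h hh
      · rwa [ha, hb]
    · exact ⟨a + 1, b + 1, 0, rfl, rfl, fun _ h => absurd h (Nat.not_lt_zero _),
        Or.inr (Or.inr hab)⟩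

theorem IsLineStart.isWindow_end {l j : ℕ} {p : ℕ × ℕ} (hp : IsLineStart R n l p) (hj : j ≤ l) :
    IsWindow R n j (p.1 + (l - j), p.2 + (l - j)) ∧
      ¬ IsWindow R n (j + 1) (p.1 + (l - j), p.2 + (l - j)) := by
  obtain ⟨hw, hnw, -⟩ := hp
  rw [← Nat.sub_add_cancel hj, isWindow_add_iff] at hw
  refine ⟨hw.2, fun hw' => hnw ?_⟩
  have := isWindow_add_iff.2 ⟨hw.1, hw'⟩
  rwa [← add_assoc, Nat.sub_add_cancel hj] at this

theorem IsLineStart.le_of_end_eq {l l' j : ℕ} {p p' : ℕ × ℕ} (hp : IsLineStart R n l p)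
    (hp' : IsLineStart R n l' p') (hj : j ≤ l) (h1 : p.1 + (l - j) = p'.1 + (l' - j))
    (h2 : p.2 + (l - j) = p'.2 + (l' - j)) : l' ≤ l := by
  by_contra! hll
  obtain ⟨-, -, hs⟩ := hp
  have hrec := hp'.1.2.2 (l' - l - 1) (by omega)
  rcases hs with hs | hs | hs
  · omega
  · omega
  · exact hs (by rwa [show p.1 - 1 = p'.1 + (l' - l - 1) by omega,
      show p.2 - 1 = p'.2 + (l' - l - 1) by omega])

open Classical in
theorem sum_card_isLineStart (j : ℕ) :
    ∑ l ∈ Icc j n, #{p ∈ grid n | IsLineStart R n l p} =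
      #{p ∈ grid n | IsWindow R n j p ∧ ¬ IsWindow R n (j + 1) p} := by
  rw [← card_sigma]
  refine card_bij (fun a _ => (a.2.1 + (a.1 - j), a.2.2 + (a.1 - j))) ?_ ?_ ?_
  · rintro ⟨l, p⟩ ha
    simp only [mem_sigma, mem_Icc, mem_filter] at ha
    have hend := ha.2.2.isWindow_end ha.1.1
    exact mem_filter.2 ⟨mem_grid_of_isWindow hend.1, hend⟩
  · rintro ⟨l, p⟩ ha ⟨l', p'⟩ ha' heq
    simp only [mem_sigma, mem_Icc, mem_filter] at ha ha'
    simp only [Prod.mk.injEq] at heq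
    obtain rfl : l = l' := le_antisymm (ha'.2.2.le_of_end_eq ha.2.2 ha'.1.1 heq.1.symm heq.2.symm)
      (ha.2.2.le_of_end_eq ha'.2.2 ha.1.1 heq.1 heq.2)
    obtain rfl : p = p' := Prod.ext (by omega) (by omega)
    rfl
  · intro q hq
    obtain ⟨-, hw, hnw⟩ := mem_filter.1 hq
    obtain ⟨a, b, t, ha, hb, hrec, hs⟩ := exists_start_of_diagonal R q.1 q.2
    have hline : IsWindow R n (t + j) (a, b) := by
      refine isWindow_add_iff.2 ⟨⟨by have := hw.1; omega, by have := hw.2.1; omega, hrec⟩, ?_⟩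
      rwa [ha, hb]
    refine ⟨⟨t + j, (a, b)⟩, ?_, ?_⟩
    · simp only [mem_sigma, mem_Icc, mem_filter]
      refine ⟨⟨by omega, by have := hline.1; omega⟩, mem_grid_of_isWindow hline, hline,
        fun hw' => hnw ?_, hs⟩
      rw [add_assoc, isWindow_add_iff] at hw'
      simpa only [ha, hb] using hw'.2
    · simp only [Nat.add_sub_cancel]
      exact Prod.ext ha hb

open Classical in
theorem card_isWindow_succ_add_sum_card_isLineStart (j : ℕ) :
    #{p ∈ grid n | IsWindow R n (j + 1) p} + ∑ l ∈ Icc j n, #{p ∈ grid n | IsLineStart R n l p} =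
      #{p ∈ grid n | IsWindow R n j p} := by
  rw [sum_card_isLineStart, ← card_filter_add_card_filter_not (s := {p ∈ grid n | IsWindow R n j p})
    (IsWindow R n (j + 1)), filter_filter, filter_filter]
  congr 2
  exact filter_congr fun p _ => ⟨fun h => ⟨(isWindow_succ_iff.1 h).1, h⟩, And.right⟩

end Combinatorics

theorem tsum_ite_le_eq_sum_Icc {M : Type*} [AddCommMonoid M] [TopologicalSpace M] {f : ℕ → M}
    {n : ℕ} (hf : ∀ l, n < l → f l = 0) (k : ℕ) :
    ∑' l, (if k ≤ l then f l else 0) = ∑ l ∈ Icc k n, f l := by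
  rw [tsum_eq_sum (s := Icc k n)]
  · exact sum_congr rfl fun l hl => if_pos (mem_Icc.1 hl).1
  · intro l hl
    rw [mem_Icc, not_and_or, not_le, not_le] at hl
    split_ifs with hkl
    · exact hf l (hl.resolve_left (not_lt.2 hkl))
    · rfl

theorem sum_Icc_natCast_mul_eq {α : Type*} [CommRing α] (L c : ℕ → α) {n k : ℕ}
    (hc : ∀ j, k ≤ j → ∑ l ∈ Icc j n, L l = c j - c (j + 1)) (hc0 : ∀ j, n < j → c j = 0) :
    ∑ l ∈ Icc k n, (l : α) * L l = k * (c k - c (k + 1)) + c (k + 1) := by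
  rcases lt_or_ge n k with hnk | hkn
  · rw [Icc_eq_empty (by omega), sum_empty, hc0 k hnk, hc0 (k + 1) (by omega)]
    ring
  refine Nat.decreasingInduction' (P := fun j =>
    ∑ l ∈ Icc j n, (l : α) * L l = j * (c j - c (j + 1)) + c (j + 1)) ?_ (by omega : k ≤ n + 1) ?_
  · intro j hjn hkj ih
    have hsplit : ∀ f : ℕ → α, ∑ l ∈ Icc j n, f l = f j + ∑ l ∈ Icc (j + 1) n, f l := fun f => by
      rw [← add_sum_Ioc_eq_sum_Icc (by omega), Icc_add_one_left_eq_Ioc]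
    have hj := hc j hkj
    have hj1 := hc (j + 1) (by omega)
    rw [hsplit] at hj ⊢
    rw [ih]
    push_cast
    linear_combination (j : α) * hj - (j + 1 : α) * hj1 + hj1
  · rw [Icc_eq_empty (by omega), sum_empty, hc0 (n + 1) (by omega), hc0 (n + 2) (by omega)]
    ring

end RecurrencePlot

namespace RecurrencePlot

section MetricSpace

variable {S : Type*} [MetricSpace S] {x : ℕ → S} {m n : ℕ} {r : ℝ}

theorem dmax_le_iff (hr : 0 ≤ r) (h : ℕ) (y z : ℕ → S) :
    dmax h y z ≤ r ↔ ∀ l < h, dist (y l) (z l) ≤ r := by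
  rw [dmax, ← Real.le_toNNReal_iff_coe_le hr, Finset.sup_le_iff]
  simp only [mem_range, Real.le_toNNReal_iff_coe_le hr, coe_nndist]

theorem dmax_shift_le_iff (hr : 0 ≤ r) {k : ℕ} (hm : 1 ≤ m) (hk : 1 ≤ k)
    (i j : ℕ) :
    dmax (m + k - 1) (shift i x) (shift j x) ≤ r ↔ ∀ h < k, isRec m x r (i + h) (j + h) := by
  simp only [isRec, dmax_le_iff hr, shift, add_assoc]
  constructor
  · exact fun H h hh l hl => H (h + l) (by omega)
  · intro H t ht
    simpa only [Nat.add_sub_cancel' (min_le_left t (k - 1))] using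
      H (min t (k - 1)) (by omega) (t - min t (k - 1)) (by omega)

open Classical in
theorem ccount_eq_card_isWindow (hr : 0 ≤ r) (hm : 1 ≤ m) {k : ℕ} (hk : 1 ≤ k) :
    Ccount m k x n r = #{p ∈ grid n | IsWindow (isRec m x r) n k p} :=
  congrArg card <| filter_congr fun p _ =>
    and_congr_right fun _ => and_congr_right fun _ => dmax_shift_le_iff hr hm hk p.1 p.2

open Classical in
theorem lcount_eq_card_isLineStart {l : ℕ} :
    Lcount m l x n r = #{p ∈ grid n | IsLineStart (isRec m x r) n l p} := by
  refine congrArg card <| filter_congr fun p _ => ?_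
  rw [IsLineStart, isWindow_succ_iff]
  constructor
  · rintro ⟨h1, h2, hw, hs, he⟩
    refine ⟨⟨h1, h2, hw⟩, fun ⟨_, h1', h2', hrec⟩ => ?_, hs⟩
    rcases he with he | he | he
    · omega
    · omega
    · exact he hrec
  · rintro ⟨hw, hnw, hs⟩
    refine ⟨hw.1, hw.2.1, hw.2.2, hs, ?_⟩
    by_contra! he
    exact hnw ⟨hw, by have := hw.1; omega, by have := hw.2.1; omega, he.2.2⟩

theorem lcount_eq_zero {l : ℕ} (hl : n < l) : Lcount m l x n r = 0 := by
  classical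
  unfold Lcount
  rw [card_eq_zero, filter_eq_empty_iff]
  rintro p - ⟨h, -⟩
  omega

theorem ccount_eq_zero {k : ℕ} (hk : n < k) : Ccount m k x n r = 0 := by
  classical
  unfold Ccount
  rw [card_eq_zero, filter_eq_empty_iff]
  rintro p - ⟨h, -⟩
  omega

theorem sum_lcount_eq_ccount_sub (hr : 0 ≤ r) (hm : 1 ≤ m) {j : ℕ} (hj : 1 ≤ j) :
    ∑ l ∈ Icc j n, (Lcount m l x n r : ℝ) =
      (Ccount m j x n r : ℝ) - (Ccount m (j + 1) x n r : ℝ) := by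
  rw [eq_sub_iff_add_eq', ccount_eq_card_isWindow hr hm hj,
    ccount_eq_card_isWindow hr hm (by omega)]
  simp only [lcount_eq_card_isLineStart]
  exact_mod_cast card_isWindow_succ_add_sum_card_isLineStart j

end MetricSpace

end RecurrencePlot

open RecurrencePlot

theorem lineCount_and_avgLineLength_eq_corrSums_general {S : Type*} [MetricSpace S] (x : ℕ → S)
    (m k n : ℕ) (hm : 1 ≤ m) (hk : 1 ≤ k) (r : ℝ) (hr : 0 ≤ r) :
    (1 / (n : ℝ) ^ 2) * (∑' l : ℕ, if k ≤ l then (Lcount m l x n r : ℝ) else 0) =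
      Csum m k x n r - Csum m (k + 1) x n r ∧
    (Csum m (k + 1) x n r < Csum m k x n r →
      LAVGsum m k x n r =
        (k : ℝ) + Csum m (k + 1) x n r / (Csum m k x n r - Csum m (k + 1) x n r)) := by
  set c : ℕ → ℝ := fun j => Ccount m j x n r
  have hdiff (j : ℕ) (hj : k ≤ j) : ∑ l ∈ Icc j n, (Lcount m l x n r : ℝ) = c j - c (j + 1) :=
    sum_lcount_eq_ccount_sub hr hm (hk.trans hj)
  have hc0 (j : ℕ) (hj : n < j) : c j = 0 := by simp [c, ccount_eq_zero hj]
  have hL0 (l : ℕ) (hl : n < l) : (Lcount m l x n r : ℝ) = 0 := by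
    simp [lcount_eq_zero hl]
  have hlines : (∑' l : ℕ, if k ≤ l then (Lcount m l x n r : ℝ) else 0) = c k - c (k + 1) :=
    (tsum_ite_le_eq_sum_Icc hL0 k).trans (hdiff k le_rfl)
  have hweighted :
      (∑' l : ℕ, if k ≤ l then (l : ℝ) * (Lcount m l x n r : ℝ) else 0) =
        k * (c k - c (k + 1)) + c (k + 1) :=
    (tsum_ite_le_eq_sum_Icc (fun l hl => by rw [hL0 l hl, mul_zero]) k).trans
      (sum_Icc_natCast_mul_eq _ c hdiff hc0)
  have hCsum (j : ℕ) : Csum m j x n r = 1 / (n : ℝ) ^ 2 * c j := one_div_mul_eq_div _ _ |>.symm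
  refine ⟨by rw [hlines, hCsum, hCsum]; ring, fun hlt => ?_⟩
  have hgap : Csum m k x n r - Csum m (k + 1) x n r ≠ 0 := (sub_pos.2 hlt).ne'
  have hden : 1 / (n : ℝ) ^ 2 * (c k - c (k + 1)) = Csum m k x n r - Csum m (k + 1) x n r := by
    rw [hCsum, hCsum]; ring
  have hnum : 1 / (n : ℝ) ^ 2 * (k * (c k - c (k + 1)) + c (k + 1)) =
      k * (Csum m k x n r - Csum m (k + 1) x n r) + Csum m (k + 1) x n r := by
    rw [hCsum, hCsum]; ring
  rw [LAVGsum, RRsum, hweighted, hlines, hnum, hden, add_div, mul_div_cancel_right₀ _ hgap]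

/-- For every metric space `(S,ρ)`, every sequence `x : ℕ → S`,
all integers `m, k, n ≥ 1` and every real `r ≥ 0`, one has
`(1/n²) Σ_{l ≥ k} L^m_l(x,n,r) = C^m_k(x,n,r) − C^m_{k+1}(x,n,r)`; consequently,
whenever `C^m_k(x,n,r) > C^m_{k+1}(x,n,r)`, the `k`-average line length satisfies
`LAVG^m_k(x,n,r) = k + C^m_{k+1}(x,n,r)/(C^m_k(x,n,r) − C^m_{k+1}(x,n,r))`. -/
theorem lineCount_and_avgLineLength_eq_corrSums {S : Type*} [MetricSpace S] (x : ℕ → S)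
    (m k n : ℕ) (hm : 1 ≤ m) (hk : 1 ≤ k) (hn : 1 ≤ n) (r : ℝ) (hr : 0 ≤ r) :
    (1 / (n : ℝ) ^ 2) * (∑' l : ℕ, if k ≤ l then (Lcount m l x n r : ℝ) else 0) =
      Csum m k x n r - Csum m (k + 1) x n r ∧
    (Csum m (k + 1) x n r < Csum m k x n r →
      LAVGsum m k x n r =
        (k : ℝ) + Csum m (k + 1) x n r / (Csum m k x n r - Csum m (k + 1) x n r)) :=
  lineCount_and_avgLineLength_eq_corrSums_general x m k n hm hk r hr
end

section
/- Let S be a separable metric space and µ a Borel probability measure on the sequence space S^ℕ that is invariant and ergodic for the left shift. Then for every integer m ≥ 1, for µ-a.e. x ∈ S^ℕ and every r > 0, the maximal diagonal line length LMAX^m(x,n,r) = max{l < n : L^m_l(x,n,r) > 0} tends to infinity as n → ∞. -/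
open Filter Topology MeasureTheory

open Classical in
/-- The maximal diagonal line length `LMAX^m(x,n,r) = max{l < n : L^m_l(x,n,r) > 0}`. -/
noncomputable def LMAX {S : Type*} [MetricSpace S] (m : ℕ) (x : ℕ → S) (n : ℕ)
    (r : ℝ) : ℕ :=
  ((Finset.range n).filter fun l => 0 < Lcount m l x n r).sup id

/-! By Poincaré recurrence for the shift, almost every `x` returns arbitrarily close to itself
in the product topology: for every window `M` there is a `j ≥ 1` with `x (j + l)` within `r`
of `x l` for all `l < m + M`. So `(0, j), …, (M - 1, j + M - 1)` are recurrences; extended as far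
as possible, they form a diagonal line of length at least `M` (and less than `n`, as `j ≥ 1`),
whence `LMAX m x n r ≥ M` once `n ≥ j + M`. -/

theorem iterate_shift_one {S : Type*} (n : ℕ) (x : ℕ → S) : (shift 1)^[n] x = shift n x := by
  induction n with
  | zero => funext l; simp [shift]
  | succ n ih =>
    funext l
    rw [Function.iterate_succ_apply', ih]
    simp only [shift]
    congr 1
    omega

section RecurrencePlot

variable {S : Type*} [MetricSpace S] {m n j k : ℕ} {x : ℕ → S} {r : ℝ}

theorem dmax_le_of_forall_dist_le (hr : 0 ≤ r) {h : ℕ} {y z : ℕ → S}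
    (H : ∀ l < h, dist (y l) (z l) ≤ r) : dmax h y z ≤ r := by
  rw [dmax, ← Real.coe_toNNReal r hr, NNReal.coe_le_coe]
  refine Finset.sup_le fun l hl => ?_
  rw [nndist_dist]
  exact Real.toNNReal_le_toNNReal (H l (Finset.mem_range.mp hl))

theorem isRec_of_forall_dist_le (hr : 0 ≤ r)
    (H : ∀ l < m + k, dist (x l) (x (j + l)) ≤ r) : ∀ h < k, isRec m x r h (j + h) :=
  fun h hh => dmax_le_of_forall_dist_le hr fun l hl => by
    simpa only [shift, add_assoc] using H (h + l) (by omega)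

theorem exists_maximal_line (hjk : j + k ≤ n) (hrec : ∀ h < k, isRec m x r h (j + h)) :
    ∃ k', k ≤ k' ∧ j + k' ≤ n ∧ (∀ h < k', isRec m x r h (j + h)) ∧
      (j + k' = n ∨ ¬ isRec m x r k' (j + k')) := by
  classical
  set Q : ℕ → Prop := fun l => ∀ h < l, isRec m x r h (j + h)
  set k' := Nat.findGreatest Q (n - j)
  have hkk' : k ≤ k' := Nat.le_findGreatest (by omega) hrec
  have hk'n : k' ≤ n - j := Nat.findGreatest_le _
  have hQk' : Q k' := Nat.findGreatest_spec (P := Q) (by omega : k ≤ n - j) hrec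
  refine ⟨k', hkk', by omega, hQk', or_iff_not_imp_left.2 fun hne hk' => ?_⟩
  refine Nat.findGreatest_is_greatest (Nat.lt_succ_self k') (by omega) fun h hh => ?_
  rcases Nat.lt_succ_iff_lt_or_eq.1 hh with hh | rfl
  exacts [hQk' h hh, hk']

theorem Lcount_pos_of_line (hjk : j + k ≤ n) (hrec : ∀ h < k, isRec m x r h (j + h))
    (hend : j + k = n ∨ ¬ isRec m x r k (j + k)) : 0 < Lcount m k x n r := by
  classical
  rw [Lcount, Finset.card_pos]
  refine ⟨(0, j), Finset.mem_filter.2 ⟨?_, by omega, hjk, ?_, Or.inl rfl, ?_⟩⟩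
  · simp only [Finset.mem_product, Finset.mem_range]
    omega
  · simpa only [zero_add] using hrec
  · simpa only [zero_add, add_comm k] using Or.inr hend

theorem le_LMAX_of_line (hj : 1 ≤ j) (hjk : j + k ≤ n)
    (hrec : ∀ h < k, isRec m x r h (j + h)) : k ≤ LMAX m x n r := by
  obtain ⟨k', hkk', hjk', hrec', hend⟩ := exists_maximal_line hjk hrec
  have hmem : k' ∈ (Finset.range n).filter fun l => 0 < Lcount m l x n r :=
    Finset.mem_filter.2 ⟨Finset.mem_range.2 (by omega), Lcount_pos_of_line hjk' hrec' hend⟩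
  exact hkk'.trans (Finset.le_sup (f := id) hmem)

theorem tendsto_LMAX_atTop_of_recurrent (hx : ∀ s ∈ 𝓝 x, ∃ᶠ n in atTop, shift n x ∈ s)
    (hr : 0 < r) : Tendsto (fun n : ℕ => LMAX m x n r) atTop atTop := by
  refine tendsto_atTop_atTop.2 fun M => ?_
  have hnhds : ∀ᶠ y in 𝓝 x, ∀ l ∈ Finset.range (m + M), dist (y l) (x l) < r :=
    (Finset.range (m + M)).eventually_all.2 fun l _ =>
      (continuous_apply l).continuousAt.eventually_mem (Metric.ball_mem_nhds (x l) hr)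
  obtain ⟨j, hjx, hj⟩ := ((hx _ hnhds).and_eventually (eventually_ge_atTop 1)).exists
  have hrec := isRec_of_forall_dist_le (k := M) hr.le fun l hl =>
    (dist_comm (x l) _ ▸ hjx l (Finset.mem_range.2 hl)).le
  exact ⟨j + M, fun n hn => le_LMAX_of_line hj hn hrec⟩

end RecurrencePlot

theorem strong_law_maxLineLength_general {S : Type*} [MetricSpace S]
    [TopologicalSpace.SeparableSpace S] [MeasurableSpace S] [BorelSpace S]
    (μ : Measure (ℕ → S)) [IsProbabilityMeasure μ]
    (hμ : Ergodic (shift 1) μ) (m : ℕ) :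
    ∀ᵐ x ∂μ, ∀ r : ℝ, 0 < r →
      Tendsto (fun n : ℕ => LMAX m x n r) atTop atTop := by
  filter_upwards [hμ.toMeasurePreserving.conservative.ae_frequently_mem_of_mem_nhds]
    with x hx r hr
  exact tendsto_LMAX_atTop_of_recurrent (by simpa only [iterate_shift_one] using hx) hr

/-- Let `S` be a separable metric space and `µ` a Borel probability
measure on `S^ℕ` invariant and ergodic for the left shift. Then for every integer
`m ≥ 1`, for µ-a.e. `x` and every `r > 0`, the maximal diagonal line length
`LMAX^m(x,n,r)` tends to infinity as `n → ∞`. -/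
theorem strong_law_maxLineLength {S : Type*} [MetricSpace S]
    [TopologicalSpace.SeparableSpace S] [MeasurableSpace S] [BorelSpace S]
    (μ : Measure (ℕ → S)) [IsProbabilityMeasure μ]
    (hμ : Ergodic (shift 1) μ) (m : ℕ) (hm : 1 ≤ m) :
    ∀ᵐ x ∂μ, ∀ r : ℝ, 0 < r →
      Tendsto (fun n : ℕ => LMAX m x n r) atTop atTop :=
  strong_law_maxLineLength_general μ hμ m
end

section
/- Let S be a metric space and µ any Borel probability measure on S^ℕ. For all integers m, k ≥ 1 and every r ≥ 0, with h = k + m − 1: c^m_k(r) = c_h(r); rr^m_k(r) = rr_h(r) − (m − 1)·(c_h(r) − c_{h+1}(r)); and, whenever c_h(r) > c_{h+1}(r), lavg^m_k(r) = lavg_h(r) − (m − 1). Here c_h = c^1_h, rr_h = rr^1_h and lavg_h = lavg^1_h denote the non-embedded (m = 1) quantities. -/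
open Filter Topology MeasureTheory

/-- The correlation integral `c^m_k(r) = (µ×µ){(x,y) : d^m_k(x,y) ≤ r}`,
where `d^m_k = dmax (m + k - 1)` (the Chebyshev embedding metric). -/
noncomputable def cInt {S : Type*} [MetricSpace S] [MeasurableSpace S]
    (μ : Measure (ℕ → S)) (m k : ℕ) (r : ℝ) : ℝ :=
  ((μ.prod μ) {p : (ℕ → S) × (ℕ → S) | dmax (m + k - 1) p.1 p.2 ≤ r}).toReal

/-- The recurrence integral `rr^m_k(r) = k·c^m_k(r) − (k − 1)·c^m_{k+1}(r)`. -/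
noncomputable def rrInt {S : Type*} [MetricSpace S] [MeasurableSpace S]
    (μ : Measure (ℕ → S)) (m k : ℕ) (r : ℝ) : ℝ :=
  (k : ℝ) * cInt μ m k r - ((k : ℝ) - 1) * cInt μ m (k + 1) r

/-- The asymptotic determinism `det^m_k(r) = rr^m_k(r)/rr^m_1(r)`. -/
noncomputable def detInt {S : Type*} [MetricSpace S] [MeasurableSpace S]
    (μ : Measure (ℕ → S)) (m k : ℕ) (r : ℝ) : ℝ :=
  rrInt μ m k r / rrInt μ m 1 r

/-- The mean diagonal line length
`lavg^m_k(r) = k + c^m_{k+1}(r)/(c^m_k(r) − c^m_{k+1}(r))`. -/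
noncomputable def lavgInt {S : Type*} [MetricSpace S] [MeasurableSpace S]
    (μ : Measure (ℕ → S)) (m k : ℕ) (r : ℝ) : ℝ :=
  (k : ℝ) + cInt μ m (k + 1) r / (cInt μ m k r - cInt μ m (k + 1) r)

section EmbeddingDimension

variable {S : Type*} [MetricSpace S] [MeasurableSpace S] (μ : Measure (ℕ → S))

theorem cInt_congr {m k m' k' : ℕ} (h : m + k - 1 = m' + k' - 1) (r : ℝ) :
    cInt μ m k r = cInt μ m' k' r := by
  unfold cInt; rw [h]

theorem cInt_eq_cInt_one (m k : ℕ) (r : ℝ) : cInt μ m k r = cInt μ 1 (k + m - 1) r :=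
  cInt_congr μ (by omega) r

theorem cInt_succ_eq_cInt_one (m k : ℕ) (r : ℝ) : cInt μ m (k + 1) r = cInt μ 1 (k + m) r :=
  cInt_congr μ (by omega) r

theorem rrInt_eq_rrInt_one_sub {m k : ℕ} (hkm : 1 ≤ k + m) (r : ℝ) :
    rrInt μ m k r =
      rrInt μ 1 (k + m - 1) r -
        ((m : ℝ) - 1) * (cInt μ 1 (k + m - 1) r - cInt μ 1 (k + m) r) := by
  unfold rrInt
  rw [Nat.sub_add_cancel hkm, cInt_eq_cInt_one μ m k, cInt_succ_eq_cInt_one, Nat.cast_sub hkm]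
  push_cast
  ring

theorem lavgInt_eq_lavgInt_one_sub {m k : ℕ} (hkm : 1 ≤ k + m) (r : ℝ) :
    lavgInt μ m k r = lavgInt μ 1 (k + m - 1) r - ((m : ℝ) - 1) := by
  unfold lavgInt
  rw [Nat.sub_add_cancel hkm, cInt_eq_cInt_one μ m k, cInt_succ_eq_cInt_one, Nat.cast_sub hkm]
  push_cast
  ring

end EmbeddingDimension

theorem embedded_asymptotic_eq_nonembedded_general {S : Type*} [MetricSpace S] [MeasurableSpace S]
    (μ : Measure (ℕ → S))
    (m k : ℕ) (hk : 1 ≤ k) (r : ℝ) :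
    cInt μ m k r = cInt μ 1 (k + m - 1) r ∧
    rrInt μ m k r =
      rrInt μ 1 (k + m - 1) r -
        ((m : ℝ) - 1) * (cInt μ 1 (k + m - 1) r - cInt μ 1 (k + m) r) ∧
    (cInt μ 1 (k + m) r < cInt μ 1 (k + m - 1) r →
      lavgInt μ m k r = lavgInt μ 1 (k + m - 1) r - ((m : ℝ) - 1)) := by
  have hkm : 1 ≤ k + m := by omega
  exact ⟨cInt_eq_cInt_one μ m k r, rrInt_eq_rrInt_one_sub μ hkm r,
    fun _ => lavgInt_eq_lavgInt_one_sub μ hkm r⟩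

/-- Let `S` be a metric space and `µ` any Borel probability measure
on `S^ℕ`. For all integers `m, k ≥ 1` and every `r ≥ 0`, with `h = k + m − 1`:
`c^m_k(r) = c_h(r)`; `rr^m_k(r) = rr_h(r) − (m − 1)·(c_h(r) − c_{h+1}(r))`; and,
whenever `c_h(r) > c_{h+1}(r)`, `lavg^m_k(r) = lavg_h(r) − (m − 1)`. Here the
subscripted quantities are the non-embedded (`m = 1`) ones. -/
theorem embedded_asymptotic_eq_nonembedded {S : Type*} [MetricSpace S] [MeasurableSpace S]
    (μ : Measure (ℕ → S)) [IsProbabilityMeasure μ]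
    (m k : ℕ) (hm : 1 ≤ m) (hk : 1 ≤ k) (r : ℝ) (hr : 0 ≤ r) :
    cInt μ m k r = cInt μ 1 (k + m - 1) r ∧
    rrInt μ m k r =
      rrInt μ 1 (k + m - 1) r -
        ((m : ℝ) - 1) * (cInt μ 1 (k + m - 1) r - cInt μ 1 (k + m) r) ∧
    (cInt μ 1 (k + m) r < cInt μ 1 (k + m - 1) r →
      lavgInt μ m k r = lavgInt μ 1 (k + m - 1) r - ((m : ℝ) - 1)) :=
  embedded_asymptotic_eq_nonembedded_general μ m k hk r
end

section
/- Let (Z,𝒜) be a measurable space, µ a probability measure on it, and T : Z → Z a measurable µ-preserving ergodic map. Let d : Z × Z → ℝ be a jointly measurable pseudometric (d(x,x) = 0, d(x,y) = d(y,x) ≥ 0, d(x,z) ≤ d(x,y) + d(y,z)) that is separable: there is a countable set D ⊆ Z such that for every x ∈ Z and every ε > 0 there is y ∈ D with d(x,y) < ε. Then for µ-a.e. x ∈ Z and every r > 0 at which the correlation integral c_d is continuous, lim_{n→∞} C_d(x,n,r) = c_d(r), and c_d(r) > 0. -/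
/-!
Birkhoff's pointwise ergodic theorem, obtained from Garsia's maximal inequality, lets almost every
orbit equidistribute for countably many observables at once: the indicators of closed balls of
rational radius around a countable dense sequence `g`, the ball masses `y ↦ µ(B(y, q))`, and the
indicators of the complements of finite unions of `β`-balls around `g`. At such a point, the
`i`-th row `(1/n)·#{j < n : d(Tⁱx, Tʲx) ≤ r}` of the correlation sum is, by the triangle
inequality, uniformly for large `n` within `ε` of the mass of a ball around `Tⁱx` whose radius
is within `4β` of `r`, except for the rows where `Tⁱx` is not `β`-close to one of finitely many
centres, and those rows have small density. Averaging over `i` squeezes `C_d(x, n, r)` between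
values of `c_d` near `r`, and continuity of `c_d` at `r` closes the gap. Positivity holds since
some ball of radius `r / 2` has positive measure.
-/

open Filter Topology MeasureTheory

open Classical in
/-- The correlation sum
`C_d(x,n,r) = (1/n²)·card{(i,j) : 0 ≤ i,j < n, d(T^i x, T^j x) ≤ r}`. -/
noncomputable def corrSum {Z : Type*} (T : Z → Z) (d : Z → Z → ℝ) (x : Z) (n : ℕ)
    (r : ℝ) : ℝ :=
  (((Finset.range n ×ˢ Finset.range n).filter fun p =>
      d (T^[p.1] x) (T^[p.2] x) ≤ r).card : ℝ) / (n : ℝ) ^ 2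

/-- The correlation integral `c_d(r) = (µ×µ){(x,y) : d(x,y) ≤ r}`. -/
noncomputable def corrInt {Z : Type*} [MeasurableSpace Z] (μ : Measure Z)
    (d : Z → Z → ℝ) (r : ℝ) : ℝ :=
  ((μ.prod μ) {p : Z × Z | d p.1 p.2 ≤ r}).toReal

section MaximalErgodic

variable {α : Type*} {T : α → α} {f : α → ℝ}

noncomputable def birkhoffMax (T : α → α) (f : α → ℝ) (N : ℕ) (x : α) : ℝ :=
  (Finset.range (N + 1)).sup' Finset.nonempty_range_add_one fun k => birkhoffSum T f k x

lemma birkhoffSum_le_birkhoffMax {k N : ℕ} (hk : k ≤ N) (x : α) :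
    birkhoffSum T f k x ≤ birkhoffMax T f N x :=
  Finset.le_sup' (fun k => birkhoffSum T f k x) (Finset.mem_range_succ_iff.2 hk)

lemma birkhoffMax_nonneg (N : ℕ) (x : α) : 0 ≤ birkhoffMax T f N x := by
  simpa using birkhoffSum_le_birkhoffMax (T := T) (f := f) N.zero_le x

lemma birkhoffMax_mono (x : α) : Monotone fun N => birkhoffMax T f N x := fun _ _ hN =>
  Finset.sup'_mono _ (Finset.range_subset_range.2 (Nat.succ_le_succ hN)) _

lemma birkhoffMax_le_add_birkhoffMax_apply {N : ℕ} {x : α} (hx : 0 < birkhoffMax T f N x) :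
    birkhoffMax T f N x ≤ f x + birkhoffMax T f N (T x) := by
  obtain ⟨k, hk, hkx⟩ := Finset.exists_mem_eq_sup' Finset.nonempty_range_add_one
    fun k => birkhoffSum T f k x
  rw [← birkhoffMax] at hkx
  rw [hkx] at hx ⊢
  cases k with
  | zero => simp at hx
  | succ k =>
    rw [birkhoffSum_succ']
    gcongr
    exact birkhoffSum_le_birkhoffMax (by rw [Finset.mem_range] at hk; omega) _

variable [MeasurableSpace α] {μ : Measure α}

lemma measurable_birkhoffSum (hT : Measurable T) (hf : Measurable f) (n : ℕ) :
    Measurable (birkhoffSum T f n) :=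
  Finset.measurable_sum _ fun i _ => hf.comp (hT.iterate i)

lemma integrable_birkhoffSum (hT : MeasurePreserving T μ μ) (hf : Integrable f μ) (n : ℕ) :
    Integrable (birkhoffSum T f n) μ :=
  integrable_finsetSum _ fun i _ => (hT.iterate i).integrable_comp_of_integrable hf

lemma measurable_birkhoffMax (hT : Measurable T) (hf : Measurable f) (N : ℕ) :
    Measurable (birkhoffMax T f N) :=
  Finset.measurable_range_sup'' fun k _ => measurable_birkhoffSum hT hf k

lemma integrable_birkhoffMax (hT : MeasurePreserving T μ μ) (hf : Integrable f μ) (N : ℕ) :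
    Integrable (birkhoffMax T f N) μ := by
  have : birkhoffMax T f N = (Finset.range (N + 1)).sup' Finset.nonempty_range_add_one
      fun k => birkhoffSum T f k := by
    ext x; simp [birkhoffMax, Finset.sup'_apply]
  rw [this]
  exact Finset.sup'_induction (p := fun g => Integrable g μ) _ _
    (fun _ h₁ _ h₂ => h₁.sup h₂) fun k _ => integrable_birkhoffSum hT hf k

/-- Garsia's form of the maximal ergodic theorem. -/
theorem setIntegral_birkhoffMax_pos_nonneg (hT : MeasurePreserving T μ μ) (hfm : Measurable f)
    (hf : Integrable f μ) (N : ℕ) : 0 ≤ ∫ x in {x | 0 < birkhoffMax T f N x}, f x ∂μ := by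
  set M := birkhoffMax T f N
  set E := {x | 0 < M x}
  have hMm : Measurable M := measurable_birkhoffMax hT.measurable hfm N
  have hE : MeasurableSet E := measurableSet_lt measurable_const hMm
  have hM : Integrable M μ := integrable_birkhoffMax hT hf N
  have hMT : Integrable (fun x => M (T x)) μ := hT.integrable_comp_of_integrable hM
  have hM_E : ∫ x in E, M x ∂μ = ∫ x, M x ∂μ :=
    setIntegral_eq_integral_of_forall_compl_eq_zero fun x hx =>
      le_antisymm (not_lt.1 hx) (birkhoffMax_nonneg N x)
  have hMT_eq : ∫ x, M (T x) ∂μ = ∫ x, M x ∂μ := by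
    rw [← integral_map hT.measurable.aemeasurable hMm.aestronglyMeasurable, hT.map_eq]
  calc 0 = ∫ x, M x ∂μ - ∫ x, M (T x) ∂μ := by rw [hMT_eq, sub_self]
    _ ≤ ∫ x in E, M x ∂μ - ∫ x in E, M (T x) ∂μ := by
      rw [hM_E]
      exact sub_le_sub_left
        (setIntegral_le_integral hMT (ae_of_all _ fun x => birkhoffMax_nonneg N (T x))) _
    _ = ∫ x in E, (M x - M (T x)) ∂μ := (integral_sub hM.integrableOn hMT.integrableOn).symm
    _ ≤ ∫ x in E, f x ∂μ := setIntegral_mono_on (hM.sub hMT).integrableOn hf.integrableOn hE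
      fun x hx => by linarith [birkhoffMax_le_add_birkhoffMax_apply (T := T) hx]

theorem integral_nonneg_of_ae_exists_birkhoffSum_pos (hT : MeasurePreserving T μ μ)
    (hfm : Measurable f) (hf : Integrable f μ) (h : ∀ᵐ x ∂μ, ∃ n, 0 < birkhoffSum T f n x) :
    0 ≤ ∫ x, f x ∂μ := by
  set E : ℕ → Set α := fun N => {x | 0 < birkhoffMax T f N x}
  have hE : ∀ N, MeasurableSet (E N) := fun N =>
    measurableSet_lt measurable_const (measurable_birkhoffMax hT.measurable hfm N)
  have hE_mono : Monotone E := fun _ _ hN _ hx => hx.trans_le (birkhoffMax_mono _ hN)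
  have hE_univ : (⋃ N, E N) =ᵐ[μ] (Set.univ : Set α) := by
    refine ae_eq_univ.2 (measure_mono_null (fun x hx => ?_) (ae_iff.1 h))
    rintro ⟨n, hn⟩
    exact hx (Set.mem_iUnion.2 ⟨n, hn.trans_le (birkhoffSum_le_birkhoffMax le_rfl x)⟩)
  have hlim := tendsto_setIntegral_of_monotone hE hE_mono hf.integrableOn
  rw [setIntegral_congr_set hE_univ, setIntegral_univ] at hlim
  exact ge_of_tendsto' hlim fun N => setIntegral_birkhoffMax_pos_nonneg hT hfm hf N

end MaximalErgodic

section BirkhoffAverage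

variable {α : Type*} {T : α → α}

lemma birkhoffAverage_mono {f g : α → ℝ} (h : f ≤ g) (n : ℕ) (x : α) :
    birkhoffAverage ℝ T f n x ≤ birkhoffAverage ℝ T g n x :=
  smul_le_smul_of_nonneg_left (Finset.sum_le_sum fun _ _ => h _) (by positivity)

lemma birkhoffAverage_const {n : ℕ} (hn : n ≠ 0) (c : ℝ) (x : α) :
    birkhoffAverage ℝ T (fun _ => c) n x = c :=
  congrFun (birkhoffAverage_of_comp_eq ℝ rfl (Nat.cast_ne_zero.2 hn)) x

lemma birkhoffAverage_le_add_of_le {f g : α → ℝ} {c : ℝ} (h : ∀ y, f y ≤ g y + c) {n : ℕ}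
    (hn : n ≠ 0) (x : α) : birkhoffAverage ℝ T f n x ≤ birkhoffAverage ℝ T g n x + c := by
  calc birkhoffAverage ℝ T f n x ≤ birkhoffAverage ℝ T (g + fun _ => c) n x :=
        birkhoffAverage_mono h n x
    _ = birkhoffAverage ℝ T g n x + c := by
      rw [birkhoffAverage_add, Pi.add_apply, Pi.add_apply, birkhoffAverage_const hn]

lemma sub_le_birkhoffAverage_of_le {f g : α → ℝ} {c : ℝ} (h : ∀ y, g y - c ≤ f y) {n : ℕ}
    (hn : n ≠ 0) (x : α) : birkhoffAverage ℝ T g n x - c ≤ birkhoffAverage ℝ T f n x := by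
  calc birkhoffAverage ℝ T g n x - c = birkhoffAverage ℝ T (g - fun _ => c) n x := by
        rw [birkhoffAverage_sub, Pi.sub_apply, Pi.sub_apply, birkhoffAverage_const hn]
    _ ≤ birkhoffAverage ℝ T f n x := birkhoffAverage_mono h n x

lemma birkhoffAverage_indicator_mono {s t : Set α} (hst : s ⊆ t) (n : ℕ) (x : α) :
    birkhoffAverage ℝ T (s.indicator (1 : α → ℝ)) n x ≤
      birkhoffAverage ℝ T (t.indicator (1 : α → ℝ)) n x :=
  birkhoffAverage_mono (Set.indicator_le_indicator_of_subset hst fun _ => zero_le_one) n x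

lemma birkhoffAverage_indicator_nonneg (s : Set α) (n : ℕ) (x : α) :
    0 ≤ birkhoffAverage ℝ T (s.indicator (1 : α → ℝ)) n x :=
  smul_nonneg (by positivity)
    (Finset.sum_nonneg fun _ _ => Set.indicator_nonneg (fun _ _ => zero_le_one) _)

lemma birkhoffAverage_indicator_le_one (s : Set α) (n : ℕ) (x : α) :
    birkhoffAverage ℝ T (s.indicator (1 : α → ℝ)) n x ≤ 1 := by
  rcases eq_or_ne n 0 with rfl | hn
  · simp
  · calc _ ≤ birkhoffAverage ℝ T (fun _ => (1 : ℝ)) n x :=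
          birkhoffAverage_mono (Set.indicator_le' (fun _ _ => le_rfl) fun _ _ => zero_le_one) n x
      _ = 1 := birkhoffAverage_const hn 1 x

end BirkhoffAverage

lemma frequently_lt_mul_of_succ_eq_add {u v : ℕ → ℝ} {c t t' : ℝ} (ht : t' < t)
    (huv : ∀ n, v (n + 1) = c + u n) (h : ∃ᶠ n in atTop, t * n < u n) :
    ∃ᶠ n in atTop, t' * n < v n := by
  have hgap : ∀ᶠ n : ℕ in atTop, t' - c < (t - t') * n :=
    (tendsto_natCast_atTop_atTop.const_mul_atTop (sub_pos.2 ht)).eventually_gt_atTop _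
  refine (tendsto_add_atTop_nat 1).frequently ((h.and_eventually hgap).mono fun n hn => ?_)
  rw [huv]
  push_cast
  linarith [hn.1, hn.2]

section Birkhoff

variable {α : Type*} {T : α → α} {f : α → ℝ}

def birkhoffExcessSet (T : α → α) (f : α → ℝ) (q : ℚ) : Set α :=
  {x | ∃ t : ℚ, q < t ∧ ∃ᶠ n in atTop, (t : ℝ) * n < birkhoffSum T f n x}

-- The slack between `q` and `t` absorbs the shift `S_{n+1} f x = f x + S_n f (T x)`.
lemma preimage_birkhoffExcessSet_subset (q : ℚ) :
    T ⁻¹' birkhoffExcessSet T f q ⊆ birkhoffExcessSet T f q := by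
  rintro x ⟨t, hqt, ht⟩
  obtain ⟨t', hqt', ht't⟩ := exists_rat_btwn hqt
  exact ⟨t', hqt', frequently_lt_mul_of_succ_eq_add (by exact_mod_cast ht't)
    (fun n => birkhoffSum_succ' T f n x) ht⟩

lemma exists_birkhoffSum_sub_pos_of_mem_birkhoffExcessSet {q : ℚ} {x : α}
    (hx : x ∈ birkhoffExcessSet T f q) : ∃ n, 0 < birkhoffSum T (fun y => f y - q) n x := by
  obtain ⟨t, hqt, ht⟩ := hx
  obtain ⟨n, hn⟩ := ht.exists
  have hqt' : (q : ℝ) * n ≤ t * n :=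
    mul_le_mul_of_nonneg_right (by exact_mod_cast hqt.le) n.cast_nonneg
  have hsum : birkhoffSum T (fun y => f y - q) n x = birkhoffSum T f n x - n * q := by
    simp [birkhoffSum, Finset.sum_sub_distrib]
  exact ⟨n, by rw [hsum]; linarith⟩

variable [MeasurableSpace α] {μ : Measure α} [IsProbabilityMeasure μ]

lemma measurableSet_birkhoffExcessSet (hT : Measurable T) (hf : Measurable f) (q : ℚ) :
    MeasurableSet (birkhoffExcessSet T f q) := by
  have : birkhoffExcessSet T f q = ⋃ (t : ℚ) (_ : q < t),
      limsup (fun n => {x | (t : ℝ) * n < birkhoffSum T f n x}) atTop := by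
    ext x; simp [birkhoffExcessSet, mem_limsup_iff_frequently_mem]
  rw [this]
  exact .iUnion fun t => .iUnion fun _ => MeasurableSet.measurableSet_limsup fun n =>
    measurableSet_lt measurable_const (measurable_birkhoffSum hT hf n)

lemma measure_birkhoffExcessSet_eq_zero (hT : Ergodic T μ) (hfm : Measurable f)
    (hf : Integrable f μ) {q : ℚ} (hq : ∫ x, f x ∂μ < q) : μ (birkhoffExcessSet T f q) = 0 := by
  have hs := measurableSet_birkhoffExcessSet hT.measurable hfm q
  rcases hT.ae_empty_or_univ_of_preimage_ae_le hs.nullMeasurableSet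
    (preimage_birkhoffExcessSet_subset q).eventuallyLE with h | h
  · exact ae_eq_empty.1 h
  have hpos : ∀ᵐ x ∂μ, ∃ n, 0 < birkhoffSum T (fun y => f y - q) n x := by
    filter_upwards [h.mem_iff] with x hx
    exact exists_birkhoffSum_sub_pos_of_mem_birkhoffExcessSet (hx.2 trivial)
  have := integral_nonneg_of_ae_exists_birkhoffSum_pos hT.toMeasurePreserving
    (hfm.sub_const q) (hf.sub (integrable_const _)) hpos
  rw [integral_sub hf (integrable_const _), integral_const, probReal_univ, one_smul] at this
  linarith

theorem ae_eventually_birkhoffAverage_le (hT : Ergodic T μ) (hfm : Measurable f)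
    (hf : Integrable f μ) {b : ℝ} (hb : ∫ x, f x ∂μ < b) :
    ∀ᵐ x ∂μ, ∀ᶠ n in atTop, birkhoffAverage ℝ T f n x ≤ b := by
  obtain ⟨q, hfq, hqb⟩ := exists_rat_btwn hb
  obtain ⟨t, hqt, htb⟩ := exists_rat_btwn hqb
  filter_upwards [measure_eq_zero_iff_ae_notMem.1 (measure_birkhoffExcessSet_eq_zero hT hfm hf hfq)]
    with x hx
  have hle : ∀ᶠ n in atTop, birkhoffSum T f n x ≤ t * n :=
    (not_frequently.1 fun h => hx ⟨t, by exact_mod_cast hqt, h⟩).mono fun _ => le_of_not_gt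
  filter_upwards [hle, eventually_gt_atTop 0] with n hn hn0
  rw [birkhoffAverage, smul_eq_mul, inv_mul_le_iff₀ (by positivity)]
  nlinarith

theorem ae_tendsto_birkhoffAverage (hT : Ergodic T μ) (hfm : Measurable f)
    (hf : Integrable f μ) :
    ∀ᵐ x ∂μ, Tendsto (fun n => birkhoffAverage ℝ T f n x) atTop (𝓝 (∫ x, f x ∂μ)) := by
  have upper : ∀ g : α → ℝ, Measurable g → Integrable g μ → ∀ᵐ x ∂μ, ∀ q : ℚ,
      ∫ x, g x ∂μ < q → ∀ᶠ n in atTop, birkhoffAverage ℝ T g n x ≤ q :=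
    fun g hgm hg => ae_all_iff.2 fun q => by
      by_cases hq : ∫ x, g x ∂μ < q
      · exact (ae_eventually_birkhoffAverage_le hT hgm hg hq).mono fun _ hx _ => hx
      · exact ae_of_all _ fun _ h => absurd h hq
  filter_upwards [upper f hfm hf, upper (-f) hfm.neg hf.neg] with x hle hneg_le
  refine tendsto_order.2 ⟨fun a ha => ?_, fun b hb => ?_⟩
  · obtain ⟨q, hfq, hqa⟩ := exists_rat_btwn (neg_lt_neg ha)
    filter_upwards [hneg_le q (by rwa [Pi.neg_def, integral_neg])] with n hn
    rw [birkhoffAverage_neg, Pi.neg_apply, Pi.neg_apply] at hn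
    linarith
  · obtain ⟨q, hfq, hqb⟩ := exists_rat_btwn hb
    filter_upwards [hle q hfq] with n hn using hn.trans_lt hqb

theorem ae_tendsto_birkhoffAverage_indicator (hT : Ergodic T μ) {s : Set α}
    (hs : MeasurableSet s) :
    ∀ᵐ x ∂μ, Tendsto (fun n => birkhoffAverage ℝ T (s.indicator (1 : α → ℝ)) n x) atTop
      (𝓝 (μ.real s)) := by
  simpa only [integral_indicator_one hs] using
    ae_tendsto_birkhoffAverage hT (measurable_one.indicator hs) ((integrable_const 1).indicator hs)

end Birkhoff

section Correlation

variable {Z : Type*} {d : Z → Z → ℝ}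

lemma exists_seq_forall_exists_lt [Nonempty Z] {D : Set Z} (hD : D.Countable)
    (hdense : ∀ x ε, 0 < ε → ∃ y ∈ D, d x y < ε) :
    ∃ g : ℕ → Z, ∀ x ε, 0 < ε → ∃ k, d x (g k) < ε := by
  obtain ⟨y, hy, -⟩ := hdense (Classical.arbitrary Z) 1 one_pos
  obtain ⟨g, rfl⟩ := hD.exists_eq_range ⟨y, hy⟩
  refine ⟨g, fun x ε hε => ?_⟩
  obtain ⟨_, ⟨k, rfl⟩, hk⟩ := hdense x ε hε
  exact ⟨k, hk⟩

lemma setOf_le_subset_setOf_le (hd_triangle : ∀ x y z, d x z ≤ d x y + d y z) {c y : Z}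
    {β r s : ℝ} (hcy : d c y ≤ β) (hs : β + r ≤ s) : {z | d y z ≤ r} ⊆ {z | d c z ≤ s} :=
  fun z (hz : d y z ≤ r) => show d c z ≤ s by linarith [hd_triangle c y z]

lemma corrSum_eq_birkhoffAverage (T : Z → Z) (d : Z → Z → ℝ) (x : Z) (n : ℕ) (r : ℝ) :
    corrSum T d x n r = birkhoffAverage ℝ T
      (fun y => birkhoffAverage ℝ T ({z | d y z ≤ r}.indicator (1 : Z → ℝ)) n x) n x := by
  classical
  simp only [corrSum, birkhoffAverage, birkhoffSum, smul_eq_mul, Finset.natCast_card_filter,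
    Finset.sum_product, Finset.mul_sum, Set.indicator_apply, Set.mem_ofPred_eq, Pi.one_apply,
    ← mul_assoc, ← sq, inv_pow, div_eq_inv_mul]

def netCover (d : Z → Z → ℝ) (g : ℕ → Z) (m : ℕ) (β : ℝ) : Set Z :=
  ⋃ k < m, {z | d z (g k) < β}

variable [MeasurableSpace Z] {μ : Measure Z}

noncomputable def ballMass (μ : Measure Z) (d : Z → Z → ℝ) (r : ℝ) (y : Z) : ℝ :=
  μ.real {z | d y z ≤ r}

lemma measurableSet_setOf_le (hd_meas : Measurable fun p : Z × Z => d p.1 p.2) (y : Z)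
    (r : ℝ) : MeasurableSet {z | d y z ≤ r} :=
  measurableSet_le (hd_meas.comp measurable_prodMk_left) measurable_const

lemma measurableSet_netCover (hd_meas : Measurable fun p : Z × Z => d p.1 p.2) (g : ℕ → Z)
    (m : ℕ) (β : ℝ) : MeasurableSet (netCover d g m β) :=
  .iUnion fun _ => .iUnion fun _ =>
    measurableSet_lt (hd_meas.comp (measurable_id.prodMk measurable_const)) measurable_const

lemma exists_measureReal_compl_netCover_lt [IsFiniteMeasure μ]
    (hd_meas : Measurable fun p : Z × Z => d p.1 p.2) {g : ℕ → Z}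
    (hg : ∀ x ε, 0 < ε → ∃ k, d x (g k) < ε) {β e : ℝ} (hβ : 0 < β) (he : 0 < e) :
    ∃ m, μ.real (netCover d g m β)ᶜ < e := by
  have hanti : Antitone fun m => (netCover d g m β)ᶜ := fun m m' hm =>
    Set.compl_subset_compl.2 (Set.biUnion_mono (fun k hk => lt_of_lt_of_le hk hm) fun _ _ => le_rfl)
  have hempty : ⋂ m, (netCover d g m β)ᶜ = ∅ := by
    refine Set.eq_empty_of_forall_notMem fun z hz => ?_
    obtain ⟨k, hk⟩ := hg z β hβ
    exact Set.mem_iInter.1 hz (k + 1) (Set.mem_iUnion₂.2 ⟨k, k.lt_succ_self, hk⟩)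
  have hlim := tendsto_measure_iInter_atTop
    (fun m => (measurableSet_netCover hd_meas g m β).compl.nullMeasurableSet) hanti
    ⟨0, measure_ne_top μ _⟩
  rw [hempty, measure_empty] at hlim
  exact (((ENNReal.tendsto_toReal ENNReal.zero_ne_top).comp hlim).eventually_lt_const
    (by simpa using he)).exists

lemma measurable_ballMass [SFinite μ] (hd_meas : Measurable fun p : Z × Z => d p.1 p.2)
    (r : ℝ) : Measurable (ballMass μ d r) :=
  (measurable_measure_prodMk_left (measurableSet_le hd_meas measurable_const)).ennreal_toReal

lemma integral_ballMass [IsFiniteMeasure μ] (hd_meas : Measurable fun p : Z × Z => d p.1 p.2)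
    (r : ℝ) : ∫ y, ballMass μ d r y ∂μ = corrInt μ d r := by
  have hS : MeasurableSet {p : Z × Z | d p.1 p.2 ≤ r} := measurableSet_le hd_meas measurable_const
  rw [corrInt, Measure.prod_apply hS, ← integral_toReal
    (measurable_measure_prodMk_left hS).aemeasurable (ae_of_all _ fun _ => measure_lt_top μ _)]
  rfl

lemma ballMass_nonneg (r : ℝ) (y : Z) : 0 ≤ ballMass μ d r y :=
  measureReal_nonneg

lemma ballMass_le_one [IsProbabilityMeasure μ] (r : ℝ) (y : Z) : ballMass μ d r y ≤ 1 :=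
  measureReal_le_one

lemma ballMass_le_ballMass [IsFiniteMeasure μ] (hd_triangle : ∀ x y z, d x z ≤ d x y + d y z)
    {c y : Z} {β r s : ℝ} (hcy : d c y ≤ β) (hs : β + r ≤ s) :
    ballMass μ d r y ≤ ballMass μ d s c :=
  measureReal_mono (setOf_le_subset_setOf_le hd_triangle hcy hs)

variable {T : Z → Z}

structure IsCorrGeneric (μ : Measure Z) (T : Z → Z) (d : Z → Z → ℝ) (g : ℕ → Z) (x : Z) :
    Prop where
  ball (k : ℕ) (s : ℚ) : Tendsto (fun n => birkhoffAverage ℝ T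
    ({z | d (g k) z ≤ s}.indicator (1 : Z → ℝ)) n x) atTop (𝓝 (ballMass μ d s (g k)))
  mass (q : ℚ) : Tendsto (fun n => birkhoffAverage ℝ T (ballMass μ d q) n x) atTop
    (𝓝 (corrInt μ d q))
  cover (m : ℕ) (β : ℚ) : Tendsto (fun n => birkhoffAverage ℝ T
    ((netCover d g m β)ᶜ.indicator (1 : Z → ℝ)) n x) atTop (𝓝 (μ.real (netCover d g m β)ᶜ))

lemma ae_isCorrGeneric [IsProbabilityMeasure μ] (hT : Ergodic T μ)
    (hd_meas : Measurable fun p : Z × Z => d p.1 p.2) (g : ℕ → Z) :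
    ∀ᵐ x ∂μ, IsCorrGeneric μ T d g x := by
  have hmass (q : ℝ) : ∀ᵐ x ∂μ, Tendsto (fun n => birkhoffAverage ℝ T (ballMass μ d q) n x)
      atTop (𝓝 (corrInt μ d q)) := by
    rw [← integral_ballMass hd_meas]
    exact ae_tendsto_birkhoffAverage hT (measurable_ballMass hd_meas q)
      (.of_bound (measurable_ballMass hd_meas q).aestronglyMeasurable 1 (ae_of_all _ fun y => by
        rw [Real.norm_of_nonneg (ballMass_nonneg q y)]; exact ballMass_le_one q y))
  filter_upwards [ae_all_iff.2 fun k => ae_all_iff.2 fun s : ℚ =>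
      ae_tendsto_birkhoffAverage_indicator hT (measurableSet_setOf_le hd_meas (g k) s),
    ae_all_iff.2 fun q : ℚ => hmass q,
    ae_all_iff.2 fun m => ae_all_iff.2 fun β : ℚ =>
      ae_tendsto_birkhoffAverage_indicator hT (measurableSet_netCover hd_meas g m β).compl]
    with x hball hmass hcover
  exact ⟨hball, hmass, hcover⟩

lemma eventually_birkhoffAverage_ball_le [IsFiniteMeasure μ] (hd_symm : ∀ x y, d x y = d y x)
    (hd_triangle : ∀ x y z, d x z ≤ d x y + d y z) {x : Z} {g : ℕ → Z} {m : ℕ}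
    {β r s q e : ℝ} (hs : β + r ≤ s) (hq : β + s ≤ q) (he : 0 < e)
    (hball : ∀ k, Tendsto (fun n => birkhoffAverage ℝ T
      ({z | d (g k) z ≤ s}.indicator (1 : Z → ℝ)) n x) atTop (𝓝 (ballMass μ d s (g k)))) :
    ∀ᶠ n in atTop, ∀ y, birkhoffAverage ℝ T ({z | d y z ≤ r}.indicator (1 : Z → ℝ)) n x ≤
      ballMass μ d q y + (netCover d g m β)ᶜ.indicator 1 y + e := by
  have hunif : ∀ᶠ n in atTop, ∀ k < m, birkhoffAverage ℝ T ({z | d (g k) z ≤ s}.indicator 1) n x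
      < ballMass μ d s (g k) + e :=
    (Set.finite_Iio m).eventually_all.2 fun k _ => (hball k).eventually_lt_const (by linarith)
  filter_upwards [hunif] with n hn y
  by_cases hy : y ∈ netCover d g m β
  · obtain ⟨k, hk, hyk : d y (g k) < β⟩ := Set.mem_iUnion₂.1 hy
    rw [Set.indicator_of_notMem (Set.notMem_compl_iff.2 hy), add_zero]
    calc _ ≤ birkhoffAverage ℝ T ({z | d (g k) z ≤ s}.indicator 1) n x :=
          birkhoffAverage_indicator_mono
            (setOf_le_subset_setOf_le hd_triangle (hd_symm _ _ ▸ hyk.le) hs) n x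
      _ ≤ ballMass μ d q y + e := by
        linarith [hn k hk, ballMass_le_ballMass (μ := μ) hd_triangle hyk.le hq]
  · rw [Set.indicator_of_mem hy, Pi.one_apply]
    linarith [birkhoffAverage_indicator_le_one (T := T) {z | d y z ≤ r} n x,
      ballMass_nonneg (μ := μ) (d := d) q y]

lemma eventually_le_birkhoffAverage_ball [IsProbabilityMeasure μ] (hd_symm : ∀ x y, d x y = d y x)
    (hd_triangle : ∀ x y z, d x z ≤ d x y + d y z) {x : Z} {g : ℕ → Z} {m : ℕ}
    {β r s q e : ℝ} (hq : β + q ≤ s) (hs : β + s ≤ r) (he : 0 < e)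
    (hball : ∀ k, Tendsto (fun n => birkhoffAverage ℝ T
      ({z | d (g k) z ≤ s}.indicator (1 : Z → ℝ)) n x) atTop (𝓝 (ballMass μ d s (g k)))) :
    ∀ᶠ n in atTop, ∀ y, ballMass μ d q y - (netCover d g m β)ᶜ.indicator 1 y - e ≤
      birkhoffAverage ℝ T ({z | d y z ≤ r}.indicator (1 : Z → ℝ)) n x := by
  have hunif : ∀ᶠ n in atTop, ∀ k < m, ballMass μ d s (g k) - e <
      birkhoffAverage ℝ T ({z | d (g k) z ≤ s}.indicator 1) n x :=
    (Set.finite_Iio m).eventually_all.2 fun k _ => (hball k).eventually_const_lt (by linarith)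
  filter_upwards [hunif] with n hn y
  by_cases hy : y ∈ netCover d g m β
  · obtain ⟨k, hk, hyk : d y (g k) < β⟩ := Set.mem_iUnion₂.1 hy
    rw [Set.indicator_of_notMem (Set.notMem_compl_iff.2 hy), sub_zero]
    calc _ ≤ birkhoffAverage ℝ T ({z | d (g k) z ≤ s}.indicator 1) n x := by
          linarith [hn k hk,
            ballMass_le_ballMass (μ := μ) hd_triangle (hd_symm _ _ ▸ hyk.le) hq]
      _ ≤ _ := birkhoffAverage_indicator_mono (setOf_le_subset_setOf_le hd_triangle hyk.le hs) n x
  · rw [Set.indicator_of_mem hy, Pi.one_apply]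
    linarith [birkhoffAverage_indicator_nonneg (T := T) {z | d y z ≤ r} n x,
      ballMass_le_one (μ := μ) (d := d) q y]

lemma exists_rat_radii_above (r : ℝ) {δ : ℝ} (hδ : 0 < δ) :
    ∃ β s q : ℚ, 0 < (β : ℝ) ∧ (β : ℝ) + r ≤ s ∧ (β : ℝ) + s ≤ q ∧ (q : ℝ) < r + δ := by
  obtain ⟨β, hβ, hβδ⟩ := exists_rat_btwn (div_pos hδ four_pos)
  obtain ⟨s, hs, hs'⟩ := exists_rat_btwn (show r + β < r + 2 * β by linarith)
  obtain ⟨q, hq, hq'⟩ := exists_rat_btwn (show (s : ℝ) + β < s + 2 * β by linarith)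
  exact ⟨β, s, q, hβ, by linarith, by linarith, by linarith⟩

lemma exists_rat_radii_below (r : ℝ) {δ : ℝ} (hδ : 0 < δ) :
    ∃ β s q : ℚ, 0 < (β : ℝ) ∧ (β : ℝ) + q ≤ s ∧ (β : ℝ) + s ≤ r ∧ r - δ < q := by
  obtain ⟨β, s, q, hβ, hs, hq, hqr⟩ := exists_rat_radii_above (-r) hδ
  exact ⟨β, -s, -q, hβ, by push_cast; linarith, by push_cast; linarith, by push_cast; linarith⟩

lemma eventually_corrSum_lt [IsProbabilityMeasure μ]
    (hd_meas : Measurable fun p : Z × Z => d p.1 p.2) (hd_symm : ∀ x y, d x y = d y x)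
    (hd_triangle : ∀ x y z, d x z ≤ d x y + d y z) {g : ℕ → Z}
    (hg : ∀ x ε, 0 < ε → ∃ k, d x (g k) < ε) {x : Z} (hx : IsCorrGeneric μ T d g x) {r a : ℝ}
    (hcont : ContinuousAt (corrInt μ d) r) (ha : corrInt μ d r < a) :
    ∀ᶠ n in atTop, corrSum T d x n r < a := by
  set e := (a - corrInt μ d r) / 3
  have he : 0 < e := by simp only [e]; linarith
  obtain ⟨δ, hδ, hcδ⟩ := Metric.eventually_nhds_iff.1
    (hcont.eventually (eventually_lt_nhds (show corrInt μ d r < corrInt μ d r + e by linarith)))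
  obtain ⟨β, s, q, hβ, hs, hq, hqr⟩ := exists_rat_radii_above r hδ
  obtain ⟨m, hm⟩ := exists_measureReal_compl_netCover_lt (μ := μ) hd_meas hg hβ he
  have hcq : corrInt μ d q < corrInt μ d r + e :=
    hcδ (by rw [Real.dist_eq, abs_lt]; constructor <;> linarith)
  have hlim : Tendsto (fun n => birkhoffAverage ℝ T
      (ballMass μ d q + (netCover d g m β)ᶜ.indicator 1) n x) atTop
      (𝓝 (corrInt μ d q + μ.real (netCover d g m β)ᶜ)) := by
    simpa only [birkhoffAverage_add, Pi.add_apply] using (hx.mass q).add (hx.cover m β)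
  filter_upwards [eventually_birkhoffAverage_ball_le hd_symm hd_triangle hs hq he (hx.ball · s),
    hlim.eventually_lt_const (show _ < corrInt μ d r + 2 * e by linarith),
    eventually_ne_atTop 0] with n hrow hn_lt hn
  calc corrSum T d x n r ≤ birkhoffAverage ℝ T
        (ballMass μ d q + (netCover d g m β)ᶜ.indicator 1) n x + e := by
        rw [corrSum_eq_birkhoffAverage]; exact birkhoffAverage_le_add_of_le hrow hn x
    _ < a := by simp only [e] at hn_lt ⊢; linarith

lemma eventually_lt_corrSum [IsProbabilityMeasure μ]
    (hd_meas : Measurable fun p : Z × Z => d p.1 p.2) (hd_symm : ∀ x y, d x y = d y x)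
    (hd_triangle : ∀ x y z, d x z ≤ d x y + d y z) {g : ℕ → Z}
    (hg : ∀ x ε, 0 < ε → ∃ k, d x (g k) < ε) {x : Z} (hx : IsCorrGeneric μ T d g x) {r a : ℝ}
    (hcont : ContinuousAt (corrInt μ d) r) (ha : a < corrInt μ d r) :
    ∀ᶠ n in atTop, a < corrSum T d x n r := by
  set e := (corrInt μ d r - a) / 3
  have he : 0 < e := by simp only [e]; linarith
  obtain ⟨δ, hδ, hcδ⟩ := Metric.eventually_nhds_iff.1
    (hcont.eventually (eventually_gt_nhds (show corrInt μ d r - e < corrInt μ d r by linarith)))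
  obtain ⟨β, s, q, hβ, hq, hs, hqr⟩ := exists_rat_radii_below r hδ
  obtain ⟨m, hm⟩ := exists_measureReal_compl_netCover_lt (μ := μ) hd_meas hg hβ he
  have hcq : corrInt μ d r - e < corrInt μ d q :=
    hcδ (by rw [Real.dist_eq, abs_lt]; constructor <;> linarith)
  have hlim : Tendsto (fun n => birkhoffAverage ℝ T
      (ballMass μ d q - (netCover d g m β)ᶜ.indicator 1) n x) atTop
      (𝓝 (corrInt μ d q - μ.real (netCover d g m β)ᶜ)) := by
    simpa only [birkhoffAverage_sub, Pi.sub_apply] using (hx.mass q).sub (hx.cover m β)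
  filter_upwards [eventually_le_birkhoffAverage_ball hd_symm hd_triangle hq hs he (hx.ball · s),
    hlim.eventually_const_lt (show corrInt μ d r - 2 * e < _ by linarith),
    eventually_ne_atTop 0] with n hrow hn_lt hn
  calc a < birkhoffAverage ℝ T
        (ballMass μ d q - (netCover d g m β)ᶜ.indicator 1) n x - e := by
        simp only [e] at hn_lt ⊢; linarith
    _ ≤ corrSum T d x n r := by
        rw [corrSum_eq_birkhoffAverage]; exact sub_le_birkhoffAverage_of_le hrow hn x

lemma corrInt_pos [IsProbabilityMeasure μ] (hd_symm : ∀ x y, d x y = d y x)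
    (hd_triangle : ∀ x y z, d x z ≤ d x y + d y z) {g : ℕ → Z}
    (hg : ∀ x ε, 0 < ε → ∃ k, d x (g k) < ε) {r : ℝ} (hr : 0 < r) :
    0 < corrInt μ d r := by
  obtain ⟨k, hk⟩ : ∃ k, μ {z | d z (g k) < r / 2} ≠ 0 := by
    by_contra! h
    have hcover : (⋃ k, {z | d z (g k) < r / 2}) = Set.univ :=
      Set.eq_univ_of_forall fun z => Set.mem_iUnion.2 (hg z _ (half_pos hr))
    simpa [hcover] using measure_iUnion_null h
  set B := {z | d z (g k) < r / 2}
  have hB : B ×ˢ B ⊆ {p : Z × Z | d p.1 p.2 ≤ r} := by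
    rintro ⟨y, z⟩ ⟨hy, hz⟩
    simp only [B, Set.mem_ofPred_eq] at hy hz ⊢
    linarith [hd_triangle y (g k) z, hd_symm (g k) z]
  refine ENNReal.toReal_pos (ne_bot_of_le_ne_bot ?_ (measure_mono hB)) (measure_ne_top _ _)
  rw [Measure.prod_prod]
  exact mul_ne_zero hk hk

end Correlation

theorem strong_law_corrSum_pseudometric_general {Z : Type*} [MeasurableSpace Z]
    (μ : Measure Z) [IsProbabilityMeasure μ] (T : Z → Z) (hT : Ergodic T μ)
    (d : Z → Z → ℝ) (hd_meas : Measurable fun p : Z × Z => d p.1 p.2)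
    (hd_symm : ∀ x y, d x y = d y x)
    (hd_triangle : ∀ x y z, d x z ≤ d x y + d y z)
    (hd_sep : ∃ D : Set Z, D.Countable ∧ ∀ x : Z, ∀ ε : ℝ, 0 < ε → ∃ y ∈ D, d x y < ε) :
    ∀ᵐ x ∂μ, ∀ r : ℝ, 0 < r → ContinuousAt (corrInt μ d) r →
      Tendsto (fun n : ℕ => corrSum T d x n r) atTop (𝓝 (corrInt μ d r)) ∧
      0 < corrInt μ d r := by
  have := nonempty_of_isProbabilityMeasure μ
  obtain ⟨D, hD, hdense⟩ := hd_sep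
  obtain ⟨g, hg⟩ := exists_seq_forall_exists_lt hD hdense
  filter_upwards [ae_isCorrGeneric hT hd_meas g] with x hx r hr hcont
  refine ⟨tendsto_order.2 ⟨fun a ha => ?_, fun a ha => ?_⟩, corrInt_pos hd_symm hd_triangle hg hr⟩
  · exact eventually_lt_corrSum hd_meas hd_symm hd_triangle hg hx hcont ha
  · exact eventually_corrSum_lt hd_meas hd_symm hd_triangle hg hx hcont ha

/-- Let `(Z,𝒜)` be a measurable space, `µ` a probability measure on
it, and `T : Z → Z` a measurable µ-preserving ergodic map. Let `d : Z × Z → ℝ` be a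
jointly measurable separable pseudometric. Then for µ-a.e. `x ∈ Z` and every `r > 0`
at which the correlation integral `c_d` is continuous,
`lim_{n→∞} C_d(x,n,r) = c_d(r)`, and `c_d(r) > 0`. -/
theorem strong_law_corrSum_pseudometric {Z : Type*} [MeasurableSpace Z]
    (μ : Measure Z) [IsProbabilityMeasure μ] (T : Z → Z) (hT : Ergodic T μ)
    (d : Z → Z → ℝ) (hd_meas : Measurable fun p : Z × Z => d p.1 p.2)
    (hd_self : ∀ x, d x x = 0) (hd_symm : ∀ x y, d x y = d y x)
    (hd_nonneg : ∀ x y, 0 ≤ d x y)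
    (hd_triangle : ∀ x y z, d x z ≤ d x y + d y z)
    (hd_sep : ∃ D : Set Z, D.Countable ∧ ∀ x : Z, ∀ ε : ℝ, 0 < ε → ∃ y ∈ D, d x y < ε) :
    ∀ᵐ x ∂μ, ∀ r : ℝ, 0 < r → ContinuousAt (corrInt μ d) r →
      Tendsto (fun n : ℕ => corrSum T d x n r) atTop (𝓝 (corrInt μ d r)) ∧
      0 < corrInt μ d r :=
  strong_law_corrSum_pseudometric_general μ T hT d hd_meas hd_symm hd_triangle hd_sep
end

section
/- Let (Z,𝒜) be a measurable space, µ a probability measure on it, and d : Z × Z → ℝ a jointly measurable pseudometric (d(x,x) = 0, d(x,y) = d(y,x) ≥ 0, d(x,z) ≤ d(x,y) + d(y,z)) that is separable: there is a countable set D ⊆ Z such that for every x ∈ Z and every ε > 0 there is y ∈ D with d(x,y) < ε. Then the correlation integral satisfies c_d(r) > 0 for every r > 0. -/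
open MeasureTheory

/-!
Countably many balls of radius `r / 2` cover `Z`, so one of them, `B`, has positive measure.
By the triangle inequality `B ×ˢ B` lies in `{d ≤ r}`, and `(µ×µ)(B ×ˢ B) = µ(B)² > 0`.
-/

theorem exists_measure_ball_pos_of_countable_dense {Z : Type*} [MeasurableSpace Z]
    {d : Z → Z → ℝ} (μ : Measure Z) [NeZero μ] {D : Set Z}
    (hD : D.Countable) (hD_dense : ∀ x : Z, ∀ ε : ℝ, 0 < ε → ∃ y ∈ D, d x y < ε)
    {ε : ℝ} (hε : 0 < ε) : ∃ y ∈ D, 0 < μ {x | d x y < ε} := by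
  have hcover : (⋃ y ∈ D, {x | d x y < ε}) = Set.univ :=
    Set.eq_univ_of_forall fun x =>
      let ⟨y, hy, hxy⟩ := hD_dense x ε hε
      Set.mem_biUnion hy hxy
  by_contra! h
  have hnull : μ (⋃ y ∈ D, {x | d x y < ε}) = 0 :=
    (measure_biUnion_null_iff hD).2 fun y hy => nonpos_iff_eq_zero.1 (h y hy)
  rw [hcover, Measure.measure_univ_eq_zero] at hnull
  exact NeZero.ne μ hnull

theorem ball_prod_ball_subset {Z : Type*} {d : Z → Z → ℝ} (hd_symm : ∀ x y, d x y = d y x)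
    (hd_triangle : ∀ x y z, d x z ≤ d x y + d y z) (y : Z) (ε : ℝ) :
    {x | d x y < ε} ×ˢ {x | d x y < ε} ⊆ {p : Z × Z | d p.1 p.2 < 2 * ε} := by
  rintro ⟨a, b⟩ ⟨ha, hb⟩
  change d a y < ε at ha
  change d b y < ε at hb
  change d a b < 2 * ε
  linarith [hd_triangle a y b, hd_symm y b]

theorem corrInt_pos_of_separable_pseudometric_general {Z : Type*} [MeasurableSpace Z]
    (μ : Measure Z) [IsProbabilityMeasure μ]
    (d : Z → Z → ℝ) (hd_symm : ∀ x y, d x y = d y x)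
    (hd_triangle : ∀ x y z, d x z ≤ d x y + d y z)
    (hd_sep : ∃ D : Set Z, D.Countable ∧ ∀ x : Z, ∀ ε : ℝ, 0 < ε → ∃ y ∈ D, d x y < ε) :
    ∀ r : ℝ, 0 < r → 0 < corrInt μ d r := by
  intro r hr
  obtain ⟨D, hD, hD_dense⟩ := hd_sep
  obtain ⟨y, -, hpos⟩ :=
    exists_measure_ball_pos_of_countable_dense μ hD hD_dense (half_pos hr)
  have hsub : {x | d x y < r / 2} ×ˢ {x | d x y < r / 2} ⊆ {p : Z × Z | d p.1 p.2 ≤ r} :=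
    (ball_prod_ball_subset hd_symm hd_triangle y (r / 2)).trans
      fun p (hp : d p.1 p.2 < 2 * (r / 2)) => show d p.1 p.2 ≤ r by linarith
  have hprod_pos : 0 < (μ.prod μ) ({x | d x y < r / 2} ×ˢ {x | d x y < r / 2}) := by
    rw [Measure.prod_prod]
    exact ENNReal.mul_pos hpos.ne' hpos.ne'
  exact ENNReal.toReal_pos (hprod_pos.trans_le (measure_mono hsub)).ne' (measure_ne_top _ _)

/-- Let `(Z,𝒜)` be a measurable space, `µ` a probability measure on
it, and `d : Z × Z → ℝ` a jointly measurable separable pseudometric. Then the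
correlation integral satisfies `c_d(r) > 0` for every `r > 0`. -/
theorem corrInt_pos_of_separable_pseudometric {Z : Type*} [MeasurableSpace Z]
    (μ : Measure Z) [IsProbabilityMeasure μ]
    (d : Z → Z → ℝ) (hd_meas : Measurable fun p : Z × Z => d p.1 p.2)
    (hd_self : ∀ x, d x x = 0) (hd_symm : ∀ x y, d x y = d y x)
    (hd_nonneg : ∀ x y, 0 ≤ d x y)
    (hd_triangle : ∀ x y z, d x z ≤ d x y + d y z)
    (hd_sep : ∃ D : Set Z, D.Countable ∧ ∀ x : Z, ∀ ε : ℝ, 0 < ε → ∃ y ∈ D, d x y < ε) :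
    ∀ r : ℝ, 0 < r → 0 < corrInt μ d r :=
  corrInt_pos_of_separable_pseudometric_general μ d hd_symm hd_triangle hd_sep
end
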